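/- Let {ψ_n}_{n≥0} be the Gram–Schmidt orthonormalization of {s^n e^s}_{n≥0} in L²(-R,R), and define a_{mk} = ∫_{-R}^{R} ψ_k'(s) ψ_m(s) ds. Then a_{mm} = 1 for all m, and a_{mk} = 0 whenever k < m. -/

import Mathlib

/-!
Write `ψₙ = Pₙ eˢ`. Then `ψₖ' = (Pₖ' + Pₖ) eˢ`, so `a_{mk} = ⟨Pₖ' eˢ, ψₘ⟩ + ⟨ψₖ, ψₘ⟩`.
Since `P₀, …, P_{m-1}` span the polynomials of degree `< m` and `ψₘ` is orthogonal to
`ψ₀, …, ψ_{m-1}`, the first term vanishes as soon as `deg Pₖ' < k ≤ m`; the second one is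
`δ_{mk}` by orthonormality.
-/

open MeasureTheory Polynomial

theorem Polynomial.Sequence.degreeLT_le_ker {K M : Type*} [Field K] [AddCommGroup M]
    [Module K M] (S : Sequence K) {m : ℕ} (L : K[X] →ₗ[K] M) (hL : ∀ i < m, L (S i) = 0) :
    degreeLT K m ≤ LinearMap.ker L := by
  rw [← S.span_degreeLT fun i _ => (leadingCoeff_ne_zero.mpr (S.ne_zero i)).isUnit,
    Submodule.span_le]
  rintro _ ⟨i, hi, rfl⟩
  exact hL i hi

theorem Continuous.integrableOn_Ioo_eval_mul {w : ℝ → ℝ} (hw : Continuous w) (Q : ℝ[X])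
    (a b : ℝ) : IntegrableOn (fun s => Q.eval s * w s) (Set.Ioo a b) :=
  ((Q.continuous.mul hw).integrableOn_Icc).mono_set Set.Ioo_subset_Icc_self

@[simps]
noncomputable def intervalPolyPairing (a b : ℝ) {w : ℝ → ℝ} (hw : Continuous w) :
    ℝ[X] →ₗ[ℝ] ℝ where
  toFun Q := ∫ s in Set.Ioo a b, Q.eval s * w s
  map_add' Q Q' := by
    simp only [eval_add, add_mul]
    exact integral_add (hw.integrableOn_Ioo_eval_mul Q a b) (hw.integrableOn_Ioo_eval_mul Q' a b)
  map_smul' c Q := by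
    simp only [eval_smul, smul_eq_mul, mul_assoc, integral_const_mul, RingHom.id_apply]

theorem Polynomial.hasDerivAt_eval_mul_exp (P : ℝ[X]) (s : ℝ) :
    HasDerivAt (fun s => P.eval s * Real.exp s) ((derivative P + P).eval s * Real.exp s) s := by
  refine ((P.hasDerivAt s).mul (Real.hasDerivAt_exp s)).congr_deriv ?_
  rw [eval_add]
  ring

theorem gramSchmidt_derivative_matrix_entries_general
    (R : ℝ)
    (ψ : ℕ → ℝ → ℝ) (P : ℕ → Polynomial ℝ)
    (hform : ∀ n s, ψ n s = (P n).eval s * Real.exp s)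
    (hdeg : ∀ n, (P n).degree = (n : ℕ))
    (horth : ∀ m k, (∫ s in Set.Ioo (-R) R, ψ m s * ψ k s) =
      if m = k then 1 else 0)
    (a : ℕ → ℕ → ℝ)
    (ha : ∀ m k, a m k = ∫ s in Set.Ioo (-R) R, deriv (ψ k) s * ψ m s) :
    (∀ m, a m m = 1) ∧ (∀ m k, k < m → a m k = 0) := by
  let S : Sequence ℝ := ⟨P, hdeg⟩
  have hψ : ∀ n, ψ n = fun s => (P n).eval s * Real.exp s := fun n => funext (hform n)
  have hcont : ∀ m, Continuous fun s => Real.exp s * ψ m s := fun m => by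
    rw [hψ m]; fun_prop
  let L m := intervalPolyPairing (-R) R (hcont m)
  have hL : ∀ m k, L m (P k) = if m = k then 1 else 0 := fun m k => by
    rw [← horth, intervalPolyPairing_apply, hψ, hψ]
    congr 1 with s
    ring
  have ha_of_le : ∀ m k, k ≤ m → a m k = if m = k then 1 else 0 := fun m k hkm => by
    have hderiv_mem : derivative (P k) ∈ degreeLT ℝ m := mem_degreeLT.2 <|
      (degree_derivative_lt (S.ne_zero k)).trans_le (by rw [hdeg]; exact_mod_cast hkm)
    have hker := S.degreeLT_le_ker (L m) (fun i hi => (hL m i).trans (if_neg hi.ne')) hderiv_mem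
    calc a m k = L m (derivative (P k) + P k) := by
          rw [ha, hψ k, intervalPolyPairing_apply]
          congr 1 with s
          rw [(hasDerivAt_eval_mul_exp (P k) s).deriv]
          ring
      _ = if m = k then 1 else 0 := by rw [map_add, LinearMap.mem_ker.1 hker, zero_add, hL]
  exact ⟨fun m => by simpa using ha_of_le m m le_rfl,
    fun m k hkm => by simpa [hkm.ne'] using ha_of_le m k hkm.le⟩

/-- For the Gram–Schmidt system ψ_n(s) = P_n(s)e^s (deg P_n = n, orthonormal in
L²(-R,R)), the numbers a_{mk} = ∫ ψ_k' ψ_m satisfy a_{mm} = 1 and a_{mk} = 0 for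
k < m. -/
theorem gramSchmidt_derivative_matrix_entries
    (R : ℝ) (hR : 0 < R)
    (ψ : ℕ → ℝ → ℝ) (P : ℕ → Polynomial ℝ)
    (hform : ∀ n s, ψ n s = (P n).eval s * Real.exp s)
    (hdeg : ∀ n, (P n).degree = (n : ℕ))
    (horth : ∀ m k, (∫ s in Set.Ioo (-R) R, ψ m s * ψ k s) =
      if m = k then 1 else 0)
    (a : ℕ → ℕ → ℝ)
    (ha : ∀ m k, a m k = ∫ s in Set.Ioo (-R) R, deriv (ψ k) s * ψ m s) :
    (∀ m, a m m = 1) ∧ (∀ m k, k < m → a m k = 0) :=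
  gramSchmidt_derivative_matrix_entries_general R ψ P hform hdeg horth a ha
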